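/- Let μ be a probability measure on ℝ with finite first moment and let ν = μ^HL be its Hardy–Littlewood transform. Then λ·q̄_ν(λ) = ∫_0^λ q̄_μ(u) du for λ ∈ (0,1]; in particular λ ↦ λ·q̄_ν(λ) is concave, and the concave envelope construction applied to ν recovers μ, i.e. ν_Δ = μ where ν_Δ is the measure whose integrated tail quantile ∫_0^λ q̄_{ν_Δ}(u) du is the concave envelope of λ·q̄_ν(λ). -/

import Mathlib

open MeasureTheory Set Filter Topology

/-- Tail function `μ([x,∞))`. -/
noncomputable def tailFn (μ : Measure ℝ) (x : ℝ) : ℝ := (μ (Ici x)).toReal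

/-- Tail quantile function: left-continuous inverse of the tail function. -/
noncomputable def tailQ (μ : Measure ℝ) (l : ℝ) : ℝ := sInf {x : ℝ | tailFn μ x < l}

/-- Call function `C_μ(K) = ∫ (s-K)⁺ μ(ds)`. -/
noncomputable def callFn (μ : Measure ℝ) (K : ℝ) : ℝ := ∫ s, max (s - K) 0 ∂μ

/-- Average Value at Risk at level `l`. -/
noncomputable def avar (μ : Measure ℝ) (l : ℝ) : ℝ := (1 / l) * ∫ u in (0 : ℝ)..l, tailQ μ u

/-- Hardy–Littlewood transform of `μ`: the law of `AVaR_μ(ξ)` for `ξ` uniform on `[0,1]`. -/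
noncomputable def hlTransform (μ : Measure ℝ) : Measure ℝ :=
  Measure.map (avar μ) (volume.restrict (Ioc (0 : ℝ) 1))

/-!
Under the uniform law on `(0,1)` the antitone function `tailQ μ` has law `μ`. Its primitive
`F l = ∫₀ˡ tailQ μ` is therefore concave, and `avar μ l = F l / l` is the slope of `F` from `0`,
hence antitone and continuous on `(0,1]`. An antitone function, continuous at `l`, of a uniform
variable has tail quantile equal to itself at `l`; so `tailQ μ^HL = avar μ` and
`l · tailQ μ^HL l = F l`. Being concave, this function is its own concave envelope, so `ν_Δ` has
the same integrated tail quantile as `μ`; by Lebesgue differentiation the tail quantiles then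
agree a.e. on `(0,1)`, and pushing the uniform law forward gives `ν_Δ = μ`.
-/

open ProbabilityTheory

theorem AntitoneOn.concaveOn_intervalIntegral {f : ℝ → ℝ} {a b : ℝ} (hf : AntitoneOn f (Ioo a b))
    (hint : IntervalIntegrable f volume a b) :
    ConcaveOn ℝ (Icc a b) fun x => ∫ t in a..x, f t := by
  refine concaveOn_of_slope_anti_adjacent (convex_Icc a b) fun {x y z} hx hz hxy hyz => ?_
  have hy : y ∈ Ioo a b := ⟨hx.1.trans_lt hxy, hyz.trans_le hz.2⟩
  have ha : a ∈ Icc a b := left_mem_Icc.2 (hx.1.trans hx.2)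
  have hint' {c d : ℝ} (hc : c ∈ Icc a b) (hd : d ∈ Icc a b) : IntervalIntegrable f volume c d :=
    hint.mono_set (uIcc_subset_uIcc (Icc_subset_uIcc hc) (Icc_subset_uIcc hd))
  have hy' : y ∈ Icc a b := Ioo_subset_Icc_self hy
  have hright : ∫ t in y..z, f t ≤ (z - y) * f y := by
    calc ∫ t in y..z, f t ≤ ∫ _ in y..z, f y :=
          intervalIntegral.integral_mono_on_of_le_Ioo hyz.le (hint' hy' hz)
            intervalIntegrable_const fun t ht =>
              hf hy ⟨hy.1.trans ht.1, ht.2.trans_le hz.2⟩ ht.1.le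
      _ = (z - y) * f y := by simp
  have hleft : (y - x) * f y ≤ ∫ t in x..y, f t := by
    calc (y - x) * f y = ∫ _ in x..y, f y := by simp
      _ ≤ ∫ t in x..y, f t :=
          intervalIntegral.integral_mono_on_of_le_Ioo hxy.le intervalIntegrable_const
            (hint' hx hy') fun t ht =>
              hf ⟨hx.1.trans_lt ht.1, ht.2.trans hy.2⟩ hy ht.2.le
  rw [intervalIntegral.integral_interval_sub_left (hint' ha hz) (hint' ha hy'),
    intervalIntegral.integral_interval_sub_left (hint' ha hy') (hint' ha hx)]
  calc (∫ t in y..z, f t) / (z - y) ≤ f y := by rwa [div_le_iff₀' (sub_pos.2 hyz)]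
    _ ≤ (∫ t in x..y, f t) / (y - x) := by rwa [le_div_iff₀' (sub_pos.2 hxy)]

theorem ae_restrict_eq_of_eqOn_intervalIntegral {f g : ℝ → ℝ} (hf : LocallyIntegrable f)
    (hg : LocallyIntegrable g) {s : Set ℝ} (hs : IsOpen s) {c : ℝ}
    (h : EqOn (fun x => ∫ t in c..x, f t) (fun x => ∫ t in c..x, g t) s) :
    f =ᵐ[volume.restrict s] g := by
  rw [EventuallyEq, ae_restrict_iff' hs.measurableSet]
  filter_upwards [LocallyIntegrable.ae_hasDerivAt_integral hf,
    LocallyIntegrable.ae_hasDerivAt_integral hg] with x hfx hgx hx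
  exact ((hfx c).congr_of_eventuallyEq
    (eventually_of_mem (hs.mem_nhds hx) fun y hy => (h hy).symm)).unique (hgx c)

section TailQuantile

variable {ρ : Measure ℝ}

lemma tailFn_nonneg (x : ℝ) : 0 ≤ tailFn ρ x := ENNReal.toReal_nonneg

lemma tailQ_of_nonpos {u : ℝ} (hu : u ≤ 0) : tailQ ρ u = 0 := by
  have : {x | tailFn ρ x < u} = ∅ :=
    eq_empty_of_forall_notMem fun x hx => (hu.trans (tailFn_nonneg x)).not_gt hx
  rw [tailQ, this, Real.sInf_empty]

variable [IsProbabilityMeasure ρ]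

lemma tailFn_eq_cdf_comp_neg : tailFn ρ = cdf (ρ.map Neg.neg) ∘ Neg.neg := by
  have := Measure.isProbabilityMeasure_map (μ := ρ) measurable_neg.aemeasurable
  ext x
  rw [Function.comp_apply, cdf_eq_real, map_measureReal_apply measurable_neg measurableSet_Iic,
    tailFn, neg_preimage, neg_Iic, neg_neg, measureReal_def]

lemma tailFn_le_one (x : ℝ) : tailFn ρ x ≤ 1 := by
  rw [tailFn_eq_cdf_comp_neg]
  exact cdf_le_one _ _

lemma antitone_tailFn : Antitone (tailFn ρ) := by
  rw [tailFn_eq_cdf_comp_neg]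
  exact (monotone_cdf _).comp_antitone fun _ _ => neg_le_neg

lemma tendsto_tailFn_atTop : Tendsto (tailFn ρ) atTop (𝓝 0) := by
  rw [tailFn_eq_cdf_comp_neg]
  exact (tendsto_cdf_atBot _).comp tendsto_neg_atTop_atBot

lemma tendsto_tailFn_atBot : Tendsto (tailFn ρ) atBot (𝓝 1) := by
  rw [tailFn_eq_cdf_comp_neg]
  exact (tendsto_cdf_atTop _).comp tendsto_neg_atBot_atTop

lemma continuousWithinAt_tailFn_Iic (x : ℝ) : ContinuousWithinAt (tailFn ρ) (Iic x) x := by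
  rw [tailFn_eq_cdf_comp_neg]
  exact ((cdf _).right_continuous (-x)).comp continuous_neg.continuousWithinAt
    fun _ hy => mem_Ici.2 (neg_le_neg hy)

lemma le_tailQ_iff {u x : ℝ} (hu : u ∈ Ioo 0 1) : x ≤ tailQ ρ u ↔ u ≤ tailFn ρ x := by
  have hne : {y | tailFn ρ y < u}.Nonempty :=
    ((tendsto_tailFn_atTop (ρ := ρ)).eventually_lt_const hu.1).exists
  have hbdd : BddBelow {y | tailFn ρ y < u} := by
    obtain ⟨z, hz⟩ := ((tendsto_tailFn_atBot (ρ := ρ)).eventually_const_lt hu.2).exists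
    exact ⟨z, fun y hy => le_of_not_gt fun hyz =>
      lt_irrefl u ((hz.trans_le (antitone_tailFn hyz.le)).trans hy)⟩
  constructor
  · intro hx
    by_contra! hlt
    obtain ⟨y, hyu, hyx⟩ :=
      ((((continuousWithinAt_tailFn_Iic x).eventually (gt_mem_nhds hlt)).filter_mono
        (nhdsWithin_mono _ Iio_subset_Iic_self)).and self_mem_nhdsWithin).exists
    exact ((csInf_le hbdd hyu).trans_lt hyx).not_ge hx
  · intro hx
    exact le_csInf hne fun y hy =>
      le_of_not_gt fun hyx => (antitone_tailFn hyx.le).not_gt (hy.trans_le hx)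

lemma antitoneOn_tailQ : AntitoneOn (tailQ ρ) (Ioo 0 1) := fun _ hu _ hv huv =>
  (le_tailQ_iff hu).2 (huv.trans ((le_tailQ_iff hv).1 le_rfl))

lemma tailQ_of_one_lt {u : ℝ} (hu : 1 < u) : tailQ ρ u = 0 := by
  have : {x | tailFn ρ x < u} = univ :=
    eq_univ_of_forall fun x => (tailFn_le_one x).trans_lt hu
  rw [tailQ, this, Real.sInf_of_not_bddBelow not_bddBelow_univ]

lemma map_tailQ_volume_Ioo : (volume.restrict (Ioo 0 1)).map (tailQ ρ) = ρ := by
  have hmeas : AEMeasurable (tailQ ρ) (volume.restrict (Ioo 0 1)) :=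
    aemeasurable_restrict_of_antitoneOn measurableSet_Ioo antitoneOn_tailQ
  refine (Measure.ext_of_Ici ρ _ fun x => ?_).symm
  have hpre : tailQ ρ ⁻¹' Ici x ∩ Ioo 0 1 = Ioc 0 (tailFn ρ x) \ {1} := by
    ext u
    simp only [mem_inter_iff, mem_preimage, mem_Ici, mem_Ioo, Set.mem_sdiff, mem_Ioc,
      mem_singleton_iff]
    constructor
    · rintro ⟨hx, hu⟩
      exact ⟨⟨hu.1, (le_tailQ_iff hu).1 hx⟩, hu.2.ne⟩
    · rintro ⟨⟨hu0, hut⟩, hu1⟩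
      have hu : u ∈ Ioo 0 1 := ⟨hu0, lt_of_le_of_ne (hut.trans (tailFn_le_one x)) hu1⟩
      exact ⟨(le_tailQ_iff hu).2 hut, hu⟩
  rw [Measure.map_apply_of_aemeasurable hmeas measurableSet_Ici,
    Measure.restrict_apply' measurableSet_Ioo, hpre, measure_sdiff_null (measure_singleton 1),
    Real.volume_Ioc, sub_zero, tailFn, ENNReal.ofReal_toReal (measure_ne_top _ _)]

lemma integrable_tailQ (hρ : Integrable id ρ) : Integrable (tailQ ρ) := by
  rw [← map_tailQ_volume_Ioo (ρ := ρ), integrable_map_measure aestronglyMeasurable_id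
    (aemeasurable_restrict_of_antitoneOn measurableSet_Ioo antitoneOn_tailQ)] at hρ
  refine ((integrableOn_Ioc_iff_integrableOn_Ioo enorm_ne_top).2 hρ)
    |>.integrable_of_forall_notMem_eq_zero fun u hu => ?_
  rcases not_and_or.1 hu with hu | hu
  · exact tailQ_of_nonpos (not_lt.1 hu)
  · exact tailQ_of_one_lt (not_le.1 hu)

theorem eq_of_eqOn_intervalIntegral_tailQ {σ μ : Measure ℝ} [IsProbabilityMeasure σ]
    [IsProbabilityMeasure μ] (hσ : Integrable id σ) (hμ : Integrable id μ)
    (h : EqOn (fun l => ∫ u in (0 : ℝ)..l, tailQ σ u) (fun l => ∫ u in (0 : ℝ)..l, tailQ μ u)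
      (Icc 0 1)) :
    σ = μ := by
  rw [← map_tailQ_volume_Ioo (ρ := σ), ← map_tailQ_volume_Ioo (ρ := μ)]
  exact Measure.map_congr <| ae_restrict_eq_of_eqOn_intervalIntegral
    (integrable_tailQ hσ).locallyIntegrable (integrable_tailQ hμ).locallyIntegrable isOpen_Ioo
    (h.mono Ioo_subset_Icc_self)

end TailQuantile

theorem tailQ_map_volume_Ioc {f : ℝ → ℝ} (hf : Measurable f) (hanti : AntitoneOn f (Ioc 0 1))
    {l : ℝ} (hl : l ∈ Ioc 0 1) (hcont : ContinuousAt f l) :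
    tailQ ((volume.restrict (Ioc 0 1)).map f) l = f l := by
  suffices {x | tailFn ((volume.restrict (Ioc 0 1)).map f) x < l} = Ioi (f l) by
    rw [tailQ, this, csInf_Ioi]
  have htail (x : ℝ) : tailFn ((volume.restrict (Ioc 0 1)).map f) x =
      volume.real (f ⁻¹' Ici x ∩ Ioc 0 1) := by
    rw [tailFn, Measure.map_apply hf measurableSet_Ici,
      Measure.restrict_apply (hf measurableSet_Ici), measureReal_def]
  ext x
  simp only [mem_ofPred_eq, mem_Ioi, htail]
  constructor
  · intro h
    by_contra! hx
    have hsub : Ioc 0 l ⊆ f ⁻¹' Ici x ∩ Ioc 0 1 := fun u hu =>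
      ⟨hx.trans (hanti ⟨hu.1, hu.2.trans hl.2⟩ hl hu.2), hu.1, hu.2.trans hl.2⟩
    have := measureReal_mono (μ := volume) hsub
      ((measure_mono inter_subset_right).trans_lt measure_Ioc_lt_top).ne
    rw [Real.volume_real_Ioc_of_le hl.1.le, sub_zero] at this
    exact this.not_gt h
  · intro hx
    obtain ⟨l', hl', hsub⟩ := exists_Ioc_subset_of_mem_nhds' (hcont (Iio_mem_nhds hx)) hl.1
    have hsub' : f ⁻¹' Ici x ∩ Ioc 0 1 ⊆ Ioc 0 l' := by
      rintro u ⟨hxu, hu⟩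
      refine ⟨hu.1, le_of_not_gt fun hlu => (show x ≤ f u from hxu).not_gt ?_⟩
      rcases le_or_gt u l with hul | hlu'
      · exact hsub ⟨hlu, hul⟩
      · exact (hanti hl hu hlu'.le).trans_lt hx
    calc volume.real (f ⁻¹' Ici x ∩ Ioc 0 1) ≤ volume.real (Ioc (0 : ℝ) l') :=
          measureReal_mono hsub' measure_Ioc_lt_top.ne
      _ = l' := by rw [Real.volume_real_Ioc_of_le hl'.1, sub_zero]
      _ < l := hl'.2

section HardyLittlewood

lemma avar_eq_slope (μ : Measure ℝ) :
    avar μ = slope (fun l => ∫ u in (0 : ℝ)..l, tailQ μ u) 0 := by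
  ext l
  simp [avar, slope_def_field, div_eq_inv_mul]

variable {μ : Measure ℝ} [IsProbabilityMeasure μ]

lemma concaveOn_intervalIntegral_tailQ (hμ : Integrable id μ) :
    ConcaveOn ℝ (Icc 0 1) fun l => ∫ u in (0 : ℝ)..l, tailQ μ u :=
  antitoneOn_tailQ.concaveOn_intervalIntegral (integrable_tailQ hμ).intervalIntegrable

lemma antitoneOn_avar (hμ : Integrable id μ) : AntitoneOn (avar μ) (Ioc 0 1) := by
  rw [avar_eq_slope]
  exact ((concaveOn_intervalIntegral_tailQ hμ).slope_anti (left_mem_Icc.2 zero_le_one)).mono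
    fun l hl => ⟨Ioc_subset_Icc_self hl, hl.1.ne'⟩

lemma tailQ_hlTransform (hμ : Integrable id μ) {l : ℝ} (hl : l ∈ Ioc 0 1) :
    tailQ (hlTransform μ) l = avar μ l := by
  have hF : Continuous fun l => ∫ u in (0 : ℝ)..l, tailQ μ u :=
    (integrable_tailQ hμ).continuous_primitive 0
  exact tailQ_map_volume_Ioc ((measurable_const.div measurable_id).mul hF.measurable)
    (antitoneOn_avar hμ) hl ((continuousAt_const.div continuousAt_id hl.1.ne').mul hF.continuousAt)

lemma mul_tailQ_hlTransform (hμ : Integrable id μ) {l : ℝ} (hl : l ∈ Icc 0 1) :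
    l * tailQ (hlTransform μ) l = ∫ u in (0 : ℝ)..l, tailQ μ u := by
  rcases hl.1.eq_or_lt with rfl | hl0
  · simp
  · rw [tailQ_hlTransform hμ ⟨hl0, hl.2⟩, avar, ← mul_assoc, mul_one_div_cancel hl0.ne', one_mul]

end HardyLittlewood

theorem stmt_12 (μ : Measure ℝ) [IsProbabilityMeasure μ] (hμ : Integrable id μ) :
    (∀ l ∈ Ioc (0 : ℝ) 1, l * tailQ (hlTransform μ) l = ∫ u in (0 : ℝ)..l, tailQ μ u) ∧
    ConcaveOn ℝ (Icc (0 : ℝ) 1) (fun l => l * tailQ (hlTransform μ) l) ∧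
    (∀ (σ : Measure ℝ), IsProbabilityMeasure σ → Integrable id σ →
      ∀ G : ℝ → ℝ,
        ConcaveOn ℝ (Icc (0 : ℝ) 1) G →
        (∀ l ∈ Icc (0 : ℝ) 1, l * tailQ (hlTransform μ) l ≤ G l) →
        (∀ G₂ : ℝ → ℝ, ConcaveOn ℝ (Icc (0 : ℝ) 1) G₂ →
          (∀ l ∈ Icc (0 : ℝ) 1, l * tailQ (hlTransform μ) l ≤ G₂ l) →
          ∀ l ∈ Icc (0 : ℝ) 1, G l ≤ G₂ l) →
        (∀ l ∈ Icc (0 : ℝ) 1, G l = ∫ u in (0 : ℝ)..l, tailQ σ u) →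
        σ = μ) := by
  have hF (l : ℝ) (hl : l ∈ Icc 0 1) := mul_tailQ_hlTransform hμ hl
  have hconc := concaveOn_intervalIntegral_tailQ hμ
  refine ⟨fun l hl => hF l (Ioc_subset_Icc_self hl), hconc.congr fun l hl => (hF l hl).symm, ?_⟩
  intro σ _ hσ G _ hG_ge hG_least hGσ
  refine eq_of_eqOn_intervalIntegral_tailQ hσ hμ fun l hl => (hGσ l hl).symm.trans ?_
  exact le_antisymm (hG_least _ hconc (fun l hl => (hF l hl).le) l hl)
    ((hF l hl).symm.le.trans (hG_ge l hl))
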